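/- For all positive integers n and m with m ≥ ⌈(n−1)/2⌉, f₃(n,m) ≤ ⌊(n+1)/2⌋. -/

import Mathlib

/-!
If `k` sets of size at most 3 cover at most `2k + 1` points, one of them can be dropped so that
the remaining `k - 1` sets cover at most `2k - 1` points: every covered point either lies in two
of the sets or is private to one, so `2 · #⋃ ≤ ∑ (#Xᵢ + #privateᵢ) ≤ 3k + ∑ #privateᵢ`, and by
pigeonhole some set owns enough private points. Since `n ≤ 2m + 1`, peeling sets off from the
back yields an ordering whose first `k` sets cover at most `min (2k + 1) n` points, whence
`Δ(𝒳, π, k) ≤ min (2k + 1) n - k ≤ (n + 1) / 2`.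
-/

open Finset

/-- The union of the first `k` sets in the ordering `π` (positions `1,…,k`,
i.e. 0-based indices `< k`). -/
def unionUpTo {α : Type*} [DecidableEq α] {m : ℕ} (X : Fin m → Finset α)
    (π : Equiv.Perm (Fin m)) (k : ℕ) : Finset α :=
  (Finset.univ.filter (fun i : Fin m => (i : ℕ) < k)).biUnion (fun i => X (π i))

/-- `Δ(𝒳,π,k) = |X_{π(1)} ∪ ⋯ ∪ X_{π(k)}| − k`. -/
def delta {α : Type*} [DecidableEq α] {m : ℕ} (X : Fin m → Finset α)
    (π : Equiv.Perm (Fin m)) (k : ℕ) : ℤ :=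
  ((unionUpTo X π k).card : ℤ) - k

/-- `Δ(𝒳,π) = max_{1 ≤ k ≤ m} Δ(𝒳,π,k)`. -/
noncomputable def DeltaPerm {α : Type*} [DecidableEq α] {m : ℕ} (X : Fin m → Finset α)
    (π : Equiv.Perm (Fin m)) : ℤ :=
  sSup {d : ℤ | ∃ k : ℕ, 1 ≤ k ∧ k ≤ m ∧ d = delta X π k}

/-- `Δ(𝒳) = min_π Δ(𝒳,π)`. -/
noncomputable def DeltaMin {α : Type*} [DecidableEq α] {m : ℕ} (X : Fin m → Finset α) : ℤ :=
  sInf {d : ℤ | ∃ π : Equiv.Perm (Fin m), d = DeltaPerm X π}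

/-- `f_c(n,m) = max_{𝒳 ∈ S(n,m,c)} Δ(𝒳)`, families of `m` subsets of an
`n`-element ground set, each of size at most `c`. -/
noncomputable def fFam (n m c : ℕ) : ℤ :=
  sSup {d : ℤ | ∃ X : Fin m → Finset (Fin n), (∀ i, (X i).card ≤ c) ∧ d = DeltaMin X}

namespace Finset

variable {α ι : Type*} [DecidableEq α] [DecidableEq ι] (X : ι → Finset α) {s : Finset ι} {i : ι}

theorem card_biUnion_erase_add_card_sdiff (hi : i ∈ s) :
    #((s.erase i).biUnion X) + #(X i \ (s.erase i).biUnion X) = #(s.biUnion X) := by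
  rw [add_comm, card_sdiff_add_card, ← biUnion_insert, insert_erase hi]

theorem two_le_card_filter_mem_add_card_filter_mem_sdiff {a : α} (ha : a ∈ s.biUnion X) :
    2 ≤ #{i ∈ s | a ∈ X i} + #{i ∈ s | a ∈ X i \ (s.erase i).biUnion X} := by
  obtain ⟨i, hi, hai⟩ := mem_biUnion.1 ha
  by_cases hpriv : a ∈ X i \ (s.erase i).biUnion X
  · have h1 : 0 < #{i ∈ s | a ∈ X i} := card_pos.2 ⟨i, mem_filter.2 ⟨hi, hai⟩⟩
    have h2 : 0 < #{i ∈ s | a ∈ X i \ (s.erase i).biUnion X} :=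
      card_pos.2 ⟨i, mem_filter.2 ⟨hi, hpriv⟩⟩
    omega
  · rw [mem_sdiff, not_and_not_right] at hpriv
    obtain ⟨j, hj, haj⟩ := mem_biUnion.1 (hpriv hai)
    have : 1 < #{i ∈ s | a ∈ X i} := one_lt_card.2
      ⟨i, mem_filter.2 ⟨hi, hai⟩, j, mem_filter.2 ⟨mem_of_mem_erase hj, haj⟩,
        (ne_of_mem_erase hj).symm⟩
    omega

/-- Each element of the union lies in two of the sets, or is private to one of them. -/
theorem two_mul_card_biUnion_le_sum_card_add_card_sdiff :
    2 * #(s.biUnion X) ≤ ∑ i ∈ s, (#(X i) + #(X i \ (s.erase i).biUnion X)) := by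
  set U := s.biUnion X
  have hcount : ∀ Y : ι → Finset α, (∀ i ∈ s, Y i ⊆ U) →
      ∑ i ∈ s, #(Y i) = ∑ a ∈ U, #{i ∈ s | a ∈ Y i} := fun Y hY => by
    refine (sum_congr rfl fun i hi => ?_).trans
      (sum_card_bipartiteAbove_eq_sum_card_bipartiteBelow (r := fun i a => a ∈ Y i))
    rw [bipartiteAbove, filter_mem_eq_inter, inter_eq_right.2 (hY i hi)]
  have hX : ∀ i ∈ s, X i ⊆ U := fun i hi => subset_biUnion_of_mem X hi
  rw [sum_add_distrib, hcount X hX, hcount _ fun i hi => sdiff_subset.trans (hX i hi),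
    ← sum_add_distrib, mul_comm, ← smul_eq_mul, ← sum_const]
  exact sum_le_sum fun a ha => two_le_card_filter_mem_add_card_filter_mem_sdiff X ha

theorem exists_card_biUnion_erase_lt (hX : ∀ i ∈ s, #(X i) ≤ 3) (hs : s.Nonempty)
    (hU : #(s.biUnion X) ≤ 2 * #s + 1) :
    ∃ i ∈ s, #((s.erase i).biUnion X) < 2 * #s := by
  set u := #(s.biUnion X)
  by_cases hsmall : u < 2 * #s
  · obtain ⟨i, hi⟩ := hs
    exact ⟨i, hi, (card_le_card (biUnion_subset_biUnion_of_subset_left X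
      (erase_subset i s))).trans_lt hsmall⟩
  let p : ι → ℕ := fun i => #(X i \ (s.erase i).biUnion X)
  have hdouble : 2 * u ≤ 3 * #s + ∑ i ∈ s, p i := by
    have hsum : 2 * u ≤ ∑ i ∈ s, (#(X i) + p i) :=
      two_mul_card_biUnion_le_sum_card_add_card_sdiff X
    have h3 : ∑ i ∈ s, #(X i) ≤ 3 * #s := by simpa [mul_comm] using sum_le_sum hX
    rw [sum_add_distrib] at hsum
    omega
  have hpigeon : ∑ _ ∈ s, (u - 2 * #s) < ∑ i ∈ s, p i := by
    rw [sum_const, smul_eq_mul]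
    have := hs.card_pos
    rcases (show u = 2 * #s ∨ u = 2 * #s + 1 by omega) with h | h
    · rw [h, Nat.sub_self, mul_zero]; omega
    · rw [h, Nat.add_sub_cancel_left, mul_one]; omega
  obtain ⟨i, hi, hpriv : u - 2 * #s < p i⟩ := exists_lt_of_sum_lt hpigeon
  have : #((s.erase i).biUnion X) + p i = u := card_biUnion_erase_add_card_sdiff X hi
  exact ⟨i, hi, by omega⟩

end Finset

section Ordering

variable {α : Type*} [DecidableEq α]

theorem unionUpTo_subset {m : ℕ} (X : Fin m → Finset α) (π : Equiv.Perm (Fin m)) (k : ℕ) :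
    unionUpTo X π k ⊆ univ.biUnion X :=
  biUnion_subset.2 fun i _ => subset_biUnion_of_mem X (mem_univ (π i))

theorem unionUpTo_eq_of_apply_castSucc {m k : ℕ} (X : Fin (m + 1) → Finset α)
    {π : Equiv.Perm (Fin (m + 1))} {σ : Equiv.Perm (Fin m)} {f : Fin m → Fin (m + 1)}
    (hπ : ∀ j, π j.castSucc = f (σ j)) (hk : k ≤ m) :
    unionUpTo X π k = unionUpTo (X ∘ f) σ k := by
  ext a
  simp only [unionUpTo, mem_biUnion, mem_filter, mem_univ, true_and, Fin.exists_fin_succ',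
    Fin.val_castSucc, Fin.val_last, hπ, Function.comp_apply]
  exact or_iff_left fun h => absurd h.1 (by omega)

theorem exists_perm_card_unionUpTo_le :
    ∀ {m : ℕ} (X : Fin m → Finset α), (∀ i, #(X i) ≤ 3) → #(univ.biUnion X) ≤ 2 * m + 1 →
      ∃ π : Equiv.Perm (Fin m), ∀ k, #(unionUpTo X π k) ≤ 2 * k + 1
  | 0, X, _, _ => ⟨1, fun k => by simp [unionUpTo]⟩
  | m + 1, X, hX, hU => by
    obtain ⟨i, -, hi⟩ := exists_card_biUnion_erase_lt X (fun i _ => hX i) univ_nonempty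
      (by simpa using hU)
    have hrest : univ.biUnion (X ∘ i.succAbove) = (univ.erase i).biUnion X := by
      rw [← compl_singleton, ← Fin.image_succAbove_univ, image_biUnion]; rfl
    obtain ⟨σ, hσ⟩ := exists_perm_card_unionUpTo_le (X ∘ i.succAbove) (fun j => hX _)
      (by rw [hrest]; rw [card_univ, Fintype.card_fin] at hi; omega)
    -- `π` lists the indices other than `i` in the order `σ`, then `i` last
    let π : Equiv.Perm (Fin (m + 1)) :=
      finSuccEquivLast.trans ((Equiv.optionCongr σ).trans (finSuccEquiv' i).symm)
    refine ⟨π, fun k => ?_⟩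
    rcases le_or_gt k m with hk | hk
    · rw [unionUpTo_eq_of_apply_castSucc X (σ := σ) (f := i.succAbove) (fun j => by simp [π]) hk]
      exact hσ k
    · exact (card_le_card (unionUpTo_subset X π k)).trans (by omega)

end Ordering

section Delta

variable {α : Type*} [DecidableEq α] {m : ℕ} (X : Fin m → Finset α)

theorem delta_le_DeltaPerm (π : Equiv.Perm (Fin m)) {k : ℕ} (hk : 1 ≤ k) (hkm : k ≤ m) :
    delta X π k ≤ DeltaPerm X π := by
  refine le_csSup ⟨#(univ.biUnion X), ?_⟩ ⟨k, hk, hkm, rfl⟩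
  rintro _ ⟨k, -, -, rfl⟩
  have := card_le_card (unionUpTo_subset X π k)
  simp only [delta]
  omega

theorem DeltaPerm_le {π : Equiv.Perm (Fin m)} {B : ℤ} (hm : 1 ≤ m)
    (h : ∀ k, 1 ≤ k → k ≤ m → delta X π k ≤ B) : DeltaPerm X π ≤ B :=
  csSup_le ⟨_, 1, le_rfl, hm, rfl⟩ fun _ ⟨k, hk, hkm, hd⟩ => hd ▸ h k hk hkm

theorem DeltaMin_le_DeltaPerm (hm : 1 ≤ m) (π : Equiv.Perm (Fin m)) :
    DeltaMin X ≤ DeltaPerm X π := by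
  refine csInf_le ⟨-1, ?_⟩ ⟨π, rfl⟩
  rintro _ ⟨σ, rfl⟩
  have : -1 ≤ delta X σ 1 := by simp only [delta]; omega
  exact this.trans (delta_le_DeltaPerm X σ le_rfl hm)

end Delta

theorem fFam_le {n m c : ℕ} {B : ℤ}
    (h : ∀ X : Fin m → Finset (Fin n), (∀ i, #(X i) ≤ c) → DeltaMin X ≤ B) : fFam n m c ≤ B :=
  csSup_le ⟨_, fun _ => ∅, fun _ => by simp, rfl⟩ fun _ ⟨X, hX, hd⟩ => hd ▸ h X hX

theorem f3_upper_bound_many_sets_general (n m : ℕ) (hm' : 1 ≤ m)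
    (hm : ⌈((n : ℚ) - 1) / 2⌉ ≤ (m : ℤ)) :
    fFam n m 3 ≤ ⌊((n : ℚ) + 1) / 2⌋ := by
  have hnm : n ≤ 2 * m + 1 := by
    have := Int.ceil_le.1 hm
    push_cast at this
    exact_mod_cast (by linarith : (n : ℚ) ≤ 2 * m + 1)
  refine fFam_le fun X hX => ?_
  obtain ⟨π, hπ⟩ := exists_perm_card_unionUpTo_le X hX
    ((card_le_univ _).trans (by simpa using hnm))
  refine (DeltaMin_le_DeltaPerm X hm' π).trans (DeltaPerm_le X hm' fun k _ _ => Int.le_floor.2 ?_)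
  have h2k : (#(unionUpTo X π k) : ℚ) ≤ 2 * k + 1 := by exact_mod_cast hπ k
  have hn : (#(unionUpTo X π k) : ℚ) ≤ n := by
    exact_mod_cast (card_le_univ (unionUpTo X π k)).trans_eq (Fintype.card_fin n)
  simp only [delta]
  push_cast
  linarith

/-- For `m ≥ ⌈(n−1)/2⌉`, `f₃(n,m) ≤ ⌊(n+1)/2⌋`. -/
theorem f3_upper_bound_many_sets (n m : ℕ) (hn : 1 ≤ n) (hm' : 1 ≤ m)
    (hm : ⌈((n : ℚ) - 1) / 2⌉ ≤ (m : ℤ)) :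
    fFam n m 3 ≤ ⌊((n : ℚ) + 1) / 2⌋ :=
  f3_upper_bound_many_sets_general n m hm' hm
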